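/- Let M be a simple matroid of rank r on ground set {1,...,n} and let ℓ ≤ r. The number of NBC sets of M of size ℓ is independent of the linear ordering of the ground set; i.e., for any two linear orderings of {1,...,n}, the corresponding families of ℓ-element no-broken-circuit sets have the same cardinality. -/

import Mathlib

open Set

/-- A circuit of a matroid: a minimal dependent set. -/
def IsCircuit {α : Type*} (M : Matroid α) (C : Set α) : Prop :=
  M.Dep C ∧ ∀ D, D ⊂ C → ¬ M.Dep D

/-- A broken circuit with respect to a linear order relation `le`. -/
def BrokenCircuitR {α : Type*} (M : Matroid α) (le : α → α → Prop) (B : Set α) : Prop :=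
  ∃ C m, IsCircuit M C ∧ m ∈ C ∧ (∀ y ∈ C, le m y) ∧ (C \ {m}).Nonempty ∧ B = C \ {m}

/-- An NBC set with respect to a linear order relation `le`. -/
def NBCR {α : Type*} (M : Matroid α) (le : α → α → Prop) (X : Set α) : Prop :=
  M.Indep X ∧ ∀ B, BrokenCircuitR M le B → ¬ B ⊆ X

/-! Call `e` *active* for `A` when `e` is spanned by the elements of `A` above it. In a loopless
matroid, `A` is NBC exactly when it has no active element. Toggling the least active element `m`
of `A` keeps both the closure of `A` and its least active element (`m` is spanned by the elements
of `A` above it, which the toggle does not touch), so it is a sign-reversing involution on the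
sets of rank `ℓ` that have an active element. Hence `∑_{A ⊆ E, r(A) = ℓ} (-1)^|A|` equals
`(-1)^ℓ` times the number of `ℓ`-element NBC sets, and the left side does not involve the order. -/

open scoped symmDiff

section

variable {α : Type*}

theorem Matroid.closure_eq_closure_of_sdiff_singleton_eq {M : Matroid α} {X Y : Set α} {e : α}
    (hXY : X \ {e} = Y \ {e}) (he : e ∈ M.closure (X \ {e})) : M.closure X = M.closure Y := by
  rw [← M.closure_sdiff_singleton_eq_closure he, hXY,
    M.closure_sdiff_singleton_eq_closure (hXY ▸ he)]

theorem isCircuit_iff_matroid_isCircuit {M : Matroid α} {C : Set α} :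
    IsCircuit M C ↔ M.IsCircuit C := by
  rw [Matroid.isCircuit_iff_forall_ssubset, IsCircuit]
  exact and_congr_right fun hC => forall_congr' fun D =>
    imp_congr_right fun hD => Matroid.not_dep_iff (hD.subset.trans hC.subset_ground)

theorem Set.neg_one_pow_ncard_symmDiff_singleton {R : Type*} [Monoid R] [HasDistribNeg R]
    {A : Set α} (hA : A.Finite) (m : α) : (-1 : R) ^ (A ∆ {m}).ncard = -(-1) ^ A.ncard := by
  by_cases hm : m ∈ A
  · have hAm : A ∆ {m} = A \ {m} := by
      ext x
      by_cases hx : x = m <;> simp [mem_symmDiff, hx, hm]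
    rw [hAm, ← ncard_sdiff_singleton_add_one hm hA, pow_succ, mul_neg_one, neg_neg]
  · have hAm : A ∆ {m} = insert m A := by
      ext x
      by_cases hx : x = m <;> simp [mem_symmDiff, hx, hm]
    rw [hAm, ncard_insert_of_notMem hm hA, pow_succ, mul_neg_one]

/-- The order is built with `le` as its `≤`, so `NBCR M le` is `NBCR M (· ≤ ·)` by `rfl`. -/
noncomputable abbrev linearOrderOfIsLinearOrder (le : α → α → Prop) [IsLinearOrder α le] :
    LinearOrder α where
  le := le
  le_refl := refl_of le
  le_trans _ _ _ := trans_of le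
  le_antisymm _ _ := antisymm
  le_total := total_of le
  toDecidableLE := Classical.decRel le

open scoped Classical in
noncomputable def subsetsOfERk (M : Matroid α) [M.Finite] (ℓ : ℕ) : Finset (Set α) :=
  {A ∈ M.ground_finite.finite_subsets.toFinset | M.eRk A = ℓ}

theorem mem_subsetsOfERk {M : Matroid α} [M.Finite] {ℓ : ℕ} {A : Set α} :
    A ∈ subsetsOfERk M ℓ ↔ A ⊆ M.E ∧ M.eRk A = ℓ := by
  simp [subsetsOfERk]

section LinearOrder

variable [LinearOrder α] {M : Matroid α} {A B C : Set α} {e m : α}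

def activeSet (M : Matroid α) (A : Set α) : Set α :=
  {e ∈ M.E | e ∈ M.closure (A ∩ Ioi e)}

theorem mem_activeSet : e ∈ activeSet M A ↔ e ∈ M.E ∧ e ∈ M.closure (A ∩ Ioi e) := Iff.rfl

theorem mem_activeSet_of_isCircuit (hC : M.IsCircuit C) (hmC : m ∈ C) (hmin : ∀ y ∈ C, m ≤ y)
    (hCA : C \ {m} ⊆ A) : m ∈ activeSet M A :=
  have hsub : C \ {m} ⊆ A ∩ Ioi m := fun y hy => ⟨hCA hy, (hmin y hy.1).lt_of_ne (Ne.symm hy.2)⟩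
  mem_activeSet.2 ⟨hC.subset_ground hmC,
    M.closure_subset_closure hsub (hC.mem_closure_sdiff_singleton_of_mem hmC)⟩

theorem exists_brokenCircuit_subset_of_mem_activeSet [M.Loopless] (hA : M.Indep A)
    (he : e ∈ activeSet M A) : ∃ B, BrokenCircuitR M (· ≤ ·) B ∧ B ⊆ A := by
  have hI : M.Indep (A ∩ Ioi e) := hA.subset inter_subset_left
  have hC : M.IsCircuit (M.fundCircuit e (A ∩ Ioi e)) :=
    hI.fundCircuit_isCircuit he.2 fun h => lt_irrefl e h.2
  have hCe : M.fundCircuit e (A ∩ Ioi e) \ {e} ⊆ A ∩ Ioi e := fun y hy =>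
    (M.fundCircuit_subset_insert e _ hy.1).resolve_left hy.2
  refine ⟨_, ⟨_, e, isCircuit_iff_matroid_isCircuit.2 hC, M.mem_fundCircuit e _, ?_, ?_, rfl⟩,
    fun y hy => (hCe hy).1⟩
  · intro y hy
    rcases eq_or_ne y e with rfl | hye
    · exact le_rfl
    · exact (hCe ⟨hy, hye⟩).2.le
  · obtain ⟨y, hy, hye⟩ := (Matroid.loopless_iff_forall_isCircuit.1 ‹_› _ hC).exists_ne e
    exact ⟨y, hy, hye⟩

theorem nbcr_iff_activeSet_eq_empty [M.Finite] [M.Loopless] (hA : A ⊆ M.E) :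
    NBCR M (· ≤ ·) A ↔ activeSet M A = ∅ := by
  refine ⟨fun hN => eq_empty_iff_forall_notMem.2 fun e he => ?_, fun h => ?_⟩
  · obtain ⟨B, hB, hBA⟩ := exists_brokenCircuit_subset_of_mem_activeSet hN.1 he
    exact hN.2 B hB hBA
  have no_circuit : ∀ C m, M.IsCircuit C → m ∈ C → (∀ y ∈ C, m ≤ y) → ¬ C \ {m} ⊆ A :=
    fun C m hC hm hmin hCA => (h ▸ mem_activeSet_of_isCircuit hC hm hmin hCA : m ∈ (∅ : Set α))
  refine ⟨by_contra fun hAi => ?_, ?_⟩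
  · obtain ⟨C, hCA, hC⟩ := ((Matroid.not_indep_iff hA).1 hAi).exists_isCircuit_subset
    obtain ⟨m, hm, hmin⟩ := exists_min_image C id (M.set_finite C hC.subset_ground) hC.nonempty
    exact no_circuit C m hC hm hmin (sdiff_subset.trans hCA)
  · rintro _ ⟨C, m, hC, hm, hmin, -, rfl⟩
    exact no_circuit C m (isCircuit_iff_matroid_isCircuit.1 hC) hm hmin

theorem closure_inter_Ioi_eq_of_sdiff_eq (hm : m ∈ activeSet M A) (hAB : A \ {m} = B \ {m})
    (he : e ≤ m) : M.closure (A ∩ Ioi e) = M.closure (B ∩ Ioi e) :=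
  Matroid.closure_eq_closure_of_sdiff_singleton_eq
    (by rw [inter_sdiff_right_comm, hAB, ← inter_sdiff_right_comm])
    (M.closure_subset_closure (show A ∩ Ioi m ⊆ (A ∩ Ioi e) \ {m} from
      fun y hy => ⟨⟨hy.1, he.trans_lt hy.2⟩, hy.2.ne'⟩) hm.2)

theorem isLeast_activeSet_of_sdiff_eq (hm : IsLeast (activeSet M A) m)
    (hAB : A \ {m} = B \ {m}) : IsLeast (activeSet M B) m := by
  have hiff : ∀ e ≤ m, e ∈ activeSet M A ↔ e ∈ activeSet M B := fun e he => by
    rw [mem_activeSet, mem_activeSet, closure_inter_Ioi_eq_of_sdiff_eq hm.1 hAB he]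
  exact ⟨(hiff m le_rfl).1 hm.1, fun e he =>
    le_of_not_gt fun hem => (hm.2 ((hiff e hem.le).2 he)).not_gt hem⟩

theorem closure_eq_of_sdiff_eq (hm : m ∈ activeSet M A) (hAB : A \ {m} = B \ {m}) :
    M.closure A = M.closure B :=
  Matroid.closure_eq_closure_of_sdiff_singleton_eq hAB
    (M.closure_subset_closure (show A ∩ Ioi m ⊆ A \ {m} from fun _ hy => ⟨hy.1, hy.2.ne'⟩) hm.2)

theorem exists_isLeast_activeSet [M.Finite] (h : (activeSet M A).Nonempty) :
    ∃ m, IsLeast (activeSet M A) m :=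
  let ⟨m, hm, hmin⟩ := exists_min_image _ id (M.set_finite _ fun _ he => he.1) h
  ⟨m, hm, hmin⟩

open scoped Classical in
noncomputable def toggleLeastActive (M : Matroid α) (A : Set α) : Set α :=
  if h : ∃ m, IsLeast (activeSet M A) m then A ∆ {h.choose} else A

theorem toggleLeastActive_eq (hm : IsLeast (activeSet M A) m) :
    toggleLeastActive M A = A ∆ {m} := by
  have h : ∃ m, IsLeast (activeSet M A) m := ⟨m, hm⟩
  rw [toggleLeastActive, dif_pos h, h.choose_spec.unique hm]

theorem isLeast_activeSet_toggleLeastActive (hm : IsLeast (activeSet M A) m) :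
    IsLeast (activeSet M (toggleLeastActive M A)) m := by
  rw [toggleLeastActive_eq hm]
  exact isLeast_activeSet_of_sdiff_eq hm (symmDiff_sdiff_right ..).symm

theorem toggleLeastActive_toggleLeastActive (hm : IsLeast (activeSet M A) m) :
    toggleLeastActive M (toggleLeastActive M A) = A := by
  rw [toggleLeastActive_eq (isLeast_activeSet_toggleLeastActive hm), toggleLeastActive_eq hm,
    symmDiff_symmDiff_cancel_right]

theorem closure_toggleLeastActive (hm : IsLeast (activeSet M A) m) :
    M.closure (toggleLeastActive M A) = M.closure A := by
  rw [toggleLeastActive_eq hm]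
  exact (closure_eq_of_sdiff_eq hm.1 (symmDiff_sdiff_right ..).symm).symm

open scoped Classical in
theorem sum_filter_activeSet_nonempty_neg_one_pow_ncard [M.Finite] (ℓ : ℕ) :
    ∑ A ∈ subsetsOfERk M ℓ with (activeSet M A).Nonempty, (-1 : ℤ) ^ A.ncard = 0 := by
  have hleast : ∀ A ∈ {A ∈ subsetsOfERk M ℓ | (activeSet M A).Nonempty},
      A ⊆ M.E ∧ M.eRk A = ℓ ∧ ∃ m, IsLeast (activeSet M A) m := fun A hA => by
    rw [Finset.mem_filter, mem_subsetsOfERk] at hA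
    exact ⟨hA.1.1, hA.1.2, exists_isLeast_activeSet hA.2⟩
  refine Finset.sum_involution (fun A _ => toggleLeastActive M A) (fun A hA => ?_)
    (fun A hA _ => ?_) (fun A hA => ?_) (fun A hA => ?_) <;>
  obtain ⟨hAE, hAr, m, hm⟩ := hleast A hA
  · rw [toggleLeastActive_eq hm, neg_one_pow_ncard_symmDiff_singleton (M.set_finite A hAE),
      add_neg_cancel]
  · rw [toggleLeastActive_eq hm, Ne, symmDiff_eq_left]
    exact singleton_ne_empty m
  · have hE : toggleLeastActive M A ⊆ M.E := by
      rw [toggleLeastActive_eq hm]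
      exact symmDiff_subset_union.trans (union_subset hAE (singleton_subset_iff.2 hm.1.1))
    have hr : M.eRk (toggleLeastActive M A) = ℓ := by
      rw [← M.eRk_closure_eq, closure_toggleLeastActive hm, M.eRk_closure_eq, hAr]
    rw [Finset.mem_filter, mem_subsetsOfERk]
    exact ⟨⟨hE, hr⟩, _, (isLeast_activeSet_toggleLeastActive hm).1⟩
  · exact toggleLeastActive_toggleLeastActive hm

open scoped Classical in
theorem coe_filter_subsetsOfERk_not_activeSet_nonempty [M.Finite] [M.Loopless] (ℓ : ℕ) :
    (({A ∈ subsetsOfERk M ℓ | ¬ (activeSet M A).Nonempty} : Finset (Set α)) : Set (Set α)) =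
      {X | NBCR M (· ≤ ·) X ∧ X.ncard = ℓ} := by
  ext X
  simp only [Finset.coe_filter, mem_subsetsOfERk, not_nonempty_iff_eq_empty]
  constructor
  · rintro ⟨⟨hXE, hr⟩, hX⟩
    have hN := (nbcr_iff_activeSet_eq_empty hXE).2 hX
    rw [hN.1.eRk_eq_encard, ← (M.set_finite X hXE).cast_ncard_eq] at hr
    exact ⟨hN, by exact_mod_cast hr⟩
  · rintro ⟨hN, hX⟩
    refine ⟨⟨hN.1.subset_ground, ?_⟩, (nbcr_iff_activeSet_eq_empty hN.1.subset_ground).1 hN⟩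
    rw [hN.1.eRk_eq_encard, ← (M.set_finite X hN.1.subset_ground).cast_ncard_eq, hX]

theorem sum_subsetsOfERk_neg_one_pow_ncard [M.Finite] [M.Loopless] (ℓ : ℕ) :
    ∑ A ∈ subsetsOfERk M ℓ, (-1 : ℤ) ^ A.ncard =
      (-1) ^ ℓ * {X | NBCR M (· ≤ ·) X ∧ X.ncard = ℓ}.ncard := by
  classical
  have hfixed := coe_filter_subsetsOfERk_not_activeSet_nonempty (M := M) ℓ
  have hcard : ∀ A ∈ {A ∈ subsetsOfERk M ℓ | ¬ (activeSet M A).Nonempty}, A.ncard = ℓ :=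
    fun A hA => (hfixed ▸ Finset.mem_coe.2 hA : A ∈ {X | NBCR M (· ≤ ·) X ∧ X.ncard = ℓ}).2
  rw [← Finset.sum_filter_add_sum_filter_not _ fun A => (activeSet M A).Nonempty,
    sum_filter_activeSet_nonempty_neg_one_pow_ncard, zero_add, Finset.sum_congr rfl fun A hA => by
      rw [hcard A hA], Finset.sum_const, ← hfixed, ncard_coe_finset, nsmul_eq_mul, mul_comm]

end LinearOrder

end

theorem nbc_count_order_independent_general {α : Type*} (M : Matroid α) (hE : M.E.Finite)
    (hsimple : (∀ x ∈ M.E, M.Indep {x}) ∧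
      ∀ x ∈ M.E, ∀ y ∈ M.E, x ≠ y → M.Indep {x, y})
    (ℓ : ℕ) (le₁ le₂ : α → α → Prop)
    (h₁ : IsLinearOrder α le₁) (h₂ : IsLinearOrder α le₂) :
    {X | NBCR M le₁ X ∧ X.ncard = ℓ}.ncard = {X | NBCR M le₂ X ∧ X.ncard = ℓ}.ncard := by
  have : M.Finite := ⟨hE⟩
  have : M.Loopless :=
    Matroid.loopless_iff_forall_isNonloop.2 fun x hx => Matroid.indep_singleton.1 (hsimple.1 x hx)
  have count : ∀ le, IsLinearOrder α le → ∑ A ∈ subsetsOfERk M ℓ, (-1 : ℤ) ^ A.ncard =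
      (-1) ^ ℓ * {X | NBCR M le X ∧ X.ncard = ℓ}.ncard := fun le _ =>
    letI := linearOrderOfIsLinearOrder le
    sum_subsetsOfERk_neg_one_pow_ncard ℓ
  exact_mod_cast mul_left_cancel₀ (pow_ne_zero ℓ (by norm_num))
    ((count le₁ h₁).symm.trans (count le₂ h₂))

/-- For a simple matroid `M` of rank `r` on a finite ground set and `ℓ ≤ r`, the
number of `ℓ`-element NBC sets does not depend on the linear ordering of the ground
set: for any two linear orders `le₁`, `le₂` the corresponding families of `ℓ`-element
no-broken-circuit sets have the same cardinality. -/
theorem nbc_count_order_independent {α : Type*} (M : Matroid α) (hE : M.E.Finite)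
    (hsimple : (∀ x ∈ M.E, M.Indep {x}) ∧
      ∀ x ∈ M.E, ∀ y ∈ M.E, x ≠ y → M.Indep {x, y})
    (r ℓ : ℕ) (hr : ∃ B, M.IsBase B ∧ B.ncard = r) (hℓ : ℓ ≤ r)
    (le₁ le₂ : α → α → Prop)
    (h₁ : IsLinearOrder α le₁) (h₂ : IsLinearOrder α le₂) :
    {X | NBCR M le₁ X ∧ X.ncard = ℓ}.ncard = {X | NBCR M le₂ X ∧ X.ncard = ℓ}.ncard :=
  nbc_count_order_independent_general M hE hsimple ℓ le₁ le₂ h₁ h₂
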